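/- Let q be an invertible element of a field of characteristic zero with q^2 ≠ 1. For positive integers m, k with 1 ≤ k ≤ m-1 define b^{(m)}_k = (-1)^{m-1} q^{-2(k-1)} (q^2 - q^{-2}), and let [m]_q = (q^m - q^{-m})/(q - q^{-1}). Then for all integers n > r ≥ 1: (-1)^{n-r} · ( b^{(n)}_r + ((q-q^{-1})/n)·(-1)^n [2r]_q + ((q-q^{-1})/n)·Σ_{s=1}^{r-1} (-1)^s [2s]_q b^{(n-s)}_{r-s} ) + ((q-q^{-1})/n)·(n-r)·(-1)^r q^{-2(r-1)}(q^2-q^{-2})/(q-q^{-1}) = 0. -/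

import Mathlib

/-!
Multiplying by `(-1) ^ r * n` strips the signs and the factor `1 / n`; what remains is, at `x = q²`,
  `x^r - x^{-r} - (x - x^{-1}) (r x^{1-r} + ∑_{s=1}^{r-1} (x^s - x^{-s}) x^{s+1-r})`.
This vanishes because, after factoring out `x^{1-r}`, the bracket is the geometric sum
`∑_{i<r} x^{2i}`.
-/

open Finset

section

variable {K : Type*} [Field K] {x : K}

theorem sub_inv_mul_inv_pow_mul_geom_sum (hx : x ≠ 0) (m : ℕ) :
    (x - x⁻¹) * x⁻¹ ^ m * ∑ i ∈ range (m + 1), (x ^ 2) ^ i =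
      x ^ (m + 1) - x⁻¹ ^ (m + 1) :=
  calc (x - x⁻¹) * x⁻¹ ^ m * ∑ i ∈ range (m + 1), (x ^ 2) ^ i
      = x⁻¹ ^ (m + 1) * ((∑ i ∈ range (m + 1), (x ^ 2) ^ i) * (x ^ 2 - 1)) := by
        simp only [inv_pow]; field_simp; ring
    _ = x⁻¹ ^ (m + 1) * ((x ^ 2) ^ (m + 1) - 1) := by rw [geom_sum_mul]
    _ = x ^ (m + 1) - x⁻¹ ^ (m + 1) := by simp only [inv_pow]; field_simp; ring

theorem sum_Icc_sub_inv_pow_mul_inv_pow (hx : x ≠ 0) (m : ℕ) :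
    ∑ s ∈ Icc 1 m, (x ^ s - x⁻¹ ^ s) * x⁻¹ ^ (m - s) =
      x⁻¹ ^ m * ∑ s ∈ Icc 1 m, ((x ^ 2) ^ s - 1) := by
  rw [mul_sum]
  refine sum_congr rfl fun s hs => ?_
  obtain ⟨t, rfl⟩ := Nat.exists_eq_add_of_le (mem_Icc.mp hs).2
  rw [Nat.add_sub_cancel_left]
  simp only [inv_pow]
  field_simp
  ring

theorem pow_succ_sub_inv_pow_succ_eq (hx : x ≠ 0) (m : ℕ) :
    x ^ (m + 1) - x⁻¹ ^ (m + 1) =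
      (x - x⁻¹) *
        ((m + 1) * x⁻¹ ^ m + ∑ s ∈ Icc 1 m, (x ^ s - x⁻¹ ^ s) * x⁻¹ ^ (m - s)) := by
  have hsplit : ∑ i ∈ range (m + 1), (x ^ 2) ^ i = 1 + ∑ s ∈ Icc 1 m, (x ^ 2) ^ s := by
    rw [sum_range_eq_add_Ico _ (Nat.add_one_pos m), Ico_add_one_right_eq_Icc, pow_zero]
  rw [← sub_inv_mul_inv_pow_mul_geom_sum hx, hsplit, sum_Icc_sub_inv_pow_mul_inv_pow hx,
    sum_sub_distrib, sum_const, Nat.card_Icc, nsmul_one, Nat.add_sub_cancel]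
  ring

theorem sub_inv_ne_zero (hx : x ≠ 0) (hx2 : x ^ 2 ≠ 1) : x - x⁻¹ ≠ 0 := by
  rwa [Ne, sub_eq_zero, ← mul_eq_one_iff_eq_inv₀ hx, ← sq]

theorem sum_Icc_neg_one_pow_mul_neg_one_pow_sub (a : ℕ → K) (c d : K) {m n : ℕ}
    (hmn : m < n) :
    ∑ s ∈ Icc 1 m,
        (-1 : K) ^ s * (a s / d) * ((-1 : K) ^ (n - s - 1) * x ^ (2 * (m + 1 - s - 1)) * c) =
      (-1) ^ (n - 1) * c / d * ∑ s ∈ Icc 1 m, a s * x ^ (2 * (m - s)) := by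
  rw [mul_sum]
  refine sum_congr rfl fun s hs => ?_
  have hsm := (mem_Icc.mp hs).2
  rw [← pow_mul_pow_sub (-1 : K) (show s ≤ n - 1 by omega), Nat.sub_right_comm n s 1,
    show m + 1 - s - 1 = m - s by omega]
  ring

end

/-- Vanishing of the scalar combination of the coefficients b^{(m)}_k =
(-1)^{m-1} q^{-2(k-1)} (q² - q⁻²) appearing in the proof of Lemma 3.11. -/
theorem b_coefficient_cancellation {K : Type*} [Field K] [CharZero K] (q : K) (hq : q ≠ 0)
    (h2 : q ^ 2 ≠ 1) (n r : ℕ) (hr : 1 ≤ r) (hnr : r < n) :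
    (-1 : K) ^ (n - r) *
        (((-1 : K) ^ (n - 1) * q⁻¹ ^ (2 * (r - 1)) * (q ^ 2 - q⁻¹ ^ 2)) +
          ((q - q⁻¹) / (n : K)) * (-1 : K) ^ n *
            ((q ^ (2 * r) - q⁻¹ ^ (2 * r)) / (q - q⁻¹)) +
          ((q - q⁻¹) / (n : K)) *
            ∑ s ∈ Finset.Icc 1 (r - 1),
              (-1 : K) ^ s * ((q ^ (2 * s) - q⁻¹ ^ (2 * s)) / (q - q⁻¹)) *
                ((-1 : K) ^ (n - s - 1) * q⁻¹ ^ (2 * (r - s - 1)) * (q ^ 2 - q⁻¹ ^ 2))) +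
      ((q - q⁻¹) / (n : K)) * ((n : K) - (r : K)) *
        ((-1 : K) ^ r * q⁻¹ ^ (2 * (r - 1)) * (q ^ 2 - q⁻¹ ^ 2) / (q - q⁻¹)) = 0 := by
  obtain ⟨m, rfl⟩ := Nat.exists_eq_add_of_le' hr
  have hd := sub_inv_ne_zero hq h2
  have hn : (n : K) ≠ 0 := Nat.cast_ne_zero.mpr (by omega)
  have hkey := pow_succ_sub_inv_pow_succ_eq (pow_ne_zero 2 hq) m
  simp only [← inv_pow, ← pow_mul] at hkey
  have hsign : (-1 : K) ^ n = (-1) ^ (n - (m + 1)) * (-1) ^ (m + 1) :=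
    (pow_sub_mul_pow _ hnr.le).symm
  have hsign' : (-1 : K) ^ (n - 1) = -(-1) ^ n := by
    rw [← pow_sub_mul_pow (-1 : K) (show 1 ≤ n by omega)]; ring
  have hsq : (-1 : K) ^ (n - (m + 1)) * (-1) ^ (n - (m + 1)) = 1 := by
    rw [← pow_add]; exact Even.neg_one_pow ⟨_, rfl⟩
  rw [Nat.add_sub_cancel, sum_Icc_neg_one_pow_mul_neg_one_pow_sub _ _ _ (by omega : m < n),
    hsign', hsign]
  generalize (∑ s ∈ Icc 1 m, (q ^ (2 * s) - q⁻¹ ^ (2 * s)) * q⁻¹ ^ (2 * (m - s))) = S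
    at hkey ⊢
  generalize q⁻¹ = p at hkey hd ⊢
  generalize (-1 : K) ^ (n - (m + 1)) = σ at hsq ⊢
  push_cast
  field_simp
  linear_combination (-1 : K) ^ (m + 1) * hkey + (-1 : K) ^ (m + 1) *
    ((q ^ (2 * (m + 1)) - p ^ (2 * (m + 1))) - (q ^ 2 - p ^ 2) * (n * p ^ (2 * m) + S)) * hsq
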